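/- arXiv:math/0509697 — 6 statements merged into one kernel-verified Lean document; each statement's English description precedes it below -/
import Mathlib

section
/- Let (p_i, q_i) for i ≥ 1 be pairs of coprime positive integers, set Q_k = q_1⋯q_k, and define rationals β_0 = 1, β_1 = p_1/q_1, and recursively β_{i+1} = q_i β_i + (1/Q_i)·(p_{i+1}/q_{i+1}). Then for every k ≥ 1, the greatest common divisor (in the sense of ℤ-divisibility of rationals) of β_0, β_1, …, β_k equals 1/Q_k. -/
/-!
Write `Q_i = q_1 ⋯ q_i` (so `Q_0 = 1`). Clearing denominators in the recursion gives
`Q_{i+1} β_{i+1} = q_{i+1} q_i (Q_i β_i) + p_{i+1}`, so every `a_i = Q_i β_i` is an integer and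
`a_i ≡ p_i (mod q_i)` is coprime to `q_i`. Hence each `β_j = a_j / Q_j` is an integer multiple of `1 / Q_k`.
Conversely, a positive common divisor of the `β_j` has the form `1 / N` because it divides
`β_0 = 1`; then `a_{m+1} N = Q_{m+1} (β_{m+1} N)` and `a_{m+1}` coprime to `q_{m+1}` lift
`Q_m ∣ N` to `Q_{m+1} ∣ N`, so `Q_k ≤ N`.
-/

open Finset

theorem Int.mul_dvd_of_dvd_of_isCoprime {Q q a N n : ℤ} (hQ : Q ≠ 0) (hQN : Q ∣ N)
    (haq : IsCoprime a q) (h : a * N = Q * q * n) : Q * q ∣ N := by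
  obtain ⟨c, rfl⟩ := hQN
  have hac : a * c = q * n := mul_left_cancel₀ hQ (by linear_combination h)
  exact mul_dvd_mul_left Q (haq.symm.dvd_of_dvd_mul_left ⟨n, hac⟩)

theorem Rat.le_one_div_of_one_eq_mul {g : ℚ} {N D : ℤ} (hg : 0 < g) (hD : 0 < D)
    (hN : 1 = N * g) (hDN : D ∣ N) : g ≤ 1 / D := by
  have hNpos : 0 < N := by
    by_contra! hN0
    have : (N : ℚ) * g ≤ 0 := mul_nonpos_of_nonpos_of_nonneg (by exact_mod_cast hN0) hg.le
    linarith
  have hDN : (D : ℚ) ≤ N := by exact_mod_cast Int.le_of_dvd hNpos hDN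
  rw [le_div_iff₀ (by positivity)]
  calc g * D ≤ g * N := by gcongr
    _ = 1 := by rw [hN, mul_comm]

section JValues

variable {p q : ℕ → ℕ} {β : ℕ → ℚ}

theorem prod_Icc_one_cast_pos (hq : ∀ i, 1 ≤ i → 0 < q i) (k : ℕ) :
    0 < ∏ j ∈ Icc 1 k, (q j : ℚ) :=
  prod_pos fun j hj => by exact_mod_cast hq j (mem_Icc.mp hj).1

theorem prod_mul_jvalue_succ (hq : ∀ i, 1 ≤ i → 0 < q i)
    (hβ : ∀ i, 1 ≤ i → β (i + 1) = (q i : ℚ) * β i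
        + (1 / ∏ j ∈ Icc 1 i, (q j : ℚ)) * ((p (i + 1) : ℚ) / (q (i + 1) : ℚ)))
    {i : ℕ} (hi : 1 ≤ i) :
    (∏ j ∈ Icc 1 (i + 1), (q j : ℚ)) * β (i + 1)
      = q (i + 1) * q i * ((∏ j ∈ Icc 1 i, (q j : ℚ)) * β i) + p (i + 1) := by
  have hQ := (prod_Icc_one_cast_pos hq i).ne'
  have hqi : (q (i + 1) : ℚ) ≠ 0 := by exact_mod_cast (hq (i + 1) (by omega)).ne'
  rw [prod_Icc_succ_top (by omega), hβ i hi]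
  field_simp

theorem exists_int_prod_mul_jvalue (hq : ∀ i, 1 ≤ i → 0 < q i)
    (hcop : ∀ i, 1 ≤ i → Nat.Coprime (p i) (q i))
    (hβ0 : β 0 = 1) (hβ1 : β 1 = (p 1 : ℚ) / (q 1 : ℚ))
    (hβ : ∀ i, 1 ≤ i → β (i + 1) = (q i : ℚ) * β i
        + (1 / ∏ j ∈ Icc 1 i, (q j : ℚ)) * ((p (i + 1) : ℚ) / (q (i + 1) : ℚ)))
    (i : ℕ) : ∃ a : ℤ, (∏ j ∈ Icc 1 i, (q j : ℚ)) * β i = a ∧ IsCoprime a (q i) := by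
  induction i with
  | zero => exact ⟨1, by simp [hβ0], isCoprime_one_left⟩
  | succ i ih =>
    have hcop' : IsCoprime (p (i + 1) : ℤ) (q (i + 1)) :=
      Nat.isCoprime_iff_coprime.mpr (hcop (i + 1) (by omega))
    rcases Nat.eq_zero_or_pos i with rfl | hi
    · refine ⟨p 1, ?_, hcop'⟩
      have hq1 : (q 1 : ℚ) ≠ 0 := by exact_mod_cast (hq 1 le_rfl).ne'
      rw [hβ1, zero_add, Icc_self, prod_singleton, mul_div_cancel₀ _ hq1, Int.cast_natCast]
    · obtain ⟨a, ha, -⟩ := ih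
      refine ⟨p (i + 1) + q (i + 1) * (q i * a), ?_, hcop'.add_mul_left_left _⟩
      rw [prod_mul_jvalue_succ hq hβ hi, ha]
      push_cast
      ring

theorem jvalue_eq_int_mul_one_div_prod (hq : ∀ i, 1 ≤ i → 0 < q i)
    (hnum : ∀ i, ∃ a : ℤ, (∏ j ∈ Icc 1 i, (q j : ℚ)) * β i = a) {j k : ℕ} (hjk : j ≤ k) :
    ∃ n : ℤ, β j = n * (1 / ∏ i ∈ Icc 1 k, (q i : ℚ)) := by
  obtain ⟨a, ha⟩ := hnum j
  obtain ⟨r, hr⟩ : ∏ i ∈ Icc 1 j, q i ∣ ∏ i ∈ Icc 1 k, q i :=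
    prod_dvd_prod_of_subset _ _ _ (Icc_subset_Icc_right hjk)
  have hQk := (prod_Icc_one_cast_pos hq k).ne'
  have hr : ∏ i ∈ Icc 1 k, (q i : ℚ) = (∏ i ∈ Icc 1 j, (q i : ℚ)) * r := by exact_mod_cast hr
  have hβj : β j = a / ∏ i ∈ Icc 1 j, (q i : ℚ) := by
    rw [← ha, mul_div_cancel_left₀ _ (prod_Icc_one_cast_pos hq j).ne']
  have hr0 : (r : ℚ) ≠ 0 := right_ne_zero_of_mul (hr ▸ hQk)
  refine ⟨a * r, ?_⟩
  rw [hβj, hr]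
  push_cast
  field_simp

theorem prod_dvd_of_forall_jvalue_mul_isInt (hq : ∀ i, 1 ≤ i → 0 < q i)
    (hnum : ∀ i, ∃ a : ℤ, (∏ j ∈ Icc 1 i, (q j : ℚ)) * β i = a ∧ IsCoprime a (q i))
    {N : ℤ} {k : ℕ} (hN : ∀ j ≤ k, ∃ n : ℤ, β j * N = n) :
    ∏ j ∈ Icc 1 k, (q j : ℤ) ∣ N := by
  induction k with
  | zero => simp
  | succ m ih =>
    obtain ⟨a, ha, haq⟩ := hnum (m + 1)
    obtain ⟨n, hn⟩ := hN (m + 1) le_rfl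
    have hQ : ∏ j ∈ Icc 1 m, (q j : ℤ) ≠ 0 := by exact_mod_cast (prod_Icc_one_cast_pos hq m).ne'
    rw [prod_Icc_succ_top (by omega)]
    refine Int.mul_dvd_of_dvd_of_isCoprime (n := n) hQ (ih fun j hj => hN j (by omega)) haq ?_
    have : (a : ℚ) * N = (∏ j ∈ Icc 1 m, (q j : ℚ)) * q (m + 1) * n := by
      rw [← ha, ← hn, prod_Icc_succ_top (by omega)]
      ring
    exact_mod_cast this

end JValues

theorem gcd_jvalues_general (p q : ℕ → ℕ) (β : ℕ → ℚ)
    (hq : ∀ i, 1 ≤ i → 0 < q i)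
    (hcop : ∀ i, 1 ≤ i → Nat.Coprime (p i) (q i))
    (hβ0 : β 0 = 1) (hβ1 : β 1 = (p 1 : ℚ) / (q 1 : ℚ))
    (hβ : ∀ i, 1 ≤ i →
      β (i + 1) = (q i : ℚ) * β i
        + (1 / ∏ j ∈ Finset.Icc 1 i, (q j : ℚ)) * ((p (i + 1) : ℚ) / (q (i + 1) : ℚ)))
    (k : ℕ) :
    IsGreatest {g : ℚ | ∀ j ≤ k, ∃ n : ℤ, β j = (n : ℚ) * g}
      (1 / ∏ j ∈ Finset.Icc 1 k, (q j : ℚ)) := by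
  have hnum := exists_int_prod_mul_jvalue hq hcop hβ0 hβ1 hβ
  refine ⟨fun j hj => jvalue_eq_int_mul_one_div_prod hq (fun i => (hnum i).imp fun _ => And.left) hj,
    fun g hg => ?_⟩
  rcases le_or_gt g 0 with hg0 | hg0
  · exact hg0.trans (by positivity)
  obtain ⟨N, hN⟩ := hg 0 k.zero_le
  rw [hβ0] at hN
  have hdvd : ∏ j ∈ Icc 1 k, (q j : ℤ) ∣ N :=
    prod_dvd_of_forall_jvalue_mul_isInt hq hnum fun j hj =>
      (hg j hj).imp fun n hn => by rw [hn, mul_assoc, mul_comm g, ← hN, mul_one]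
  have hQ : 0 < ∏ j ∈ Icc 1 k, (q j : ℤ) := by exact_mod_cast prod_Icc_one_cast_pos hq k
  simpa using Rat.le_one_div_of_one_eq_mul hg0 hQ hN hdvd

/-- The gcd (in the sense of ℤ-divisibility of rationals) of the j-values
`β_0, β_1, …, β_k` equals `1/(q_1 ⋯ q_k)`. -/
theorem gcd_jvalues (p q : ℕ → ℕ) (β : ℕ → ℚ)
    (hp : ∀ i, 1 ≤ i → 0 < p i) (hq : ∀ i, 1 ≤ i → 0 < q i)
    (hcop : ∀ i, 1 ≤ i → Nat.Coprime (p i) (q i))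
    (hβ0 : β 0 = 1) (hβ1 : β 1 = (p 1 : ℚ) / (q 1 : ℚ))
    (hβ : ∀ i, 1 ≤ i →
      β (i + 1) = (q i : ℚ) * β i
        + (1 / ∏ j ∈ Finset.Icc 1 i, (q j : ℚ)) * ((p (i + 1) : ℚ) / (q (i + 1) : ℚ)))
    (k : ℕ) (hk : 1 ≤ k) :
    IsGreatest {g : ℚ | ∀ j ≤ k, ∃ n : ℤ, β j = (n : ℚ) * g}
      (1 / ∏ j ∈ Finset.Icc 1 k, (q j : ℚ)) :=
  gcd_jvalues_general p q β hq hcop hβ0 hβ1 hβ k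
end

section
/- With β_0 = 1, β_1 = p_1/q_1, β_{i+1} = q_i β_i + (1/Q_i)·(p_{i+1}/q_{i+1}) where (p_i,q_i) are coprime positive integers and Q_i = q_1⋯q_i, the subgroup of ℚ generated by β_0, β_1, …, β_k equals (1/Q_k)ℤ for every k ≥ 1. -/
/-!
Write `Q_k = q_1 ⋯ q_k`. Modulo `Γ_k = (1/Q_k)ℤ` the recursion gives
`β_{k+1} ≡ p_{k+1}/Q_{k+1}`, so `Γ_{k+1}` is generated by `p_{k+1}/Q_{k+1}` and
`1/Q_k = q_{k+1}/Q_{k+1}`; since `p_{k+1}` and `q_{k+1}` are coprime, a Bézout relation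
shows that these two generate `(1/Q_{k+1})ℤ`.
-/

open AddSubgroup

namespace AddSubgroup

variable {G : Type*} [AddGroup G]

theorem zmultiples_zsmul_sup_zmultiples_zsmul {a b : ℤ} (h : IsCoprime a b) (x : G) :
    zmultiples (a • x) ⊔ zmultiples (b • x) = zmultiples x := by
  refine le_antisymm (sup_le ?_ ?_) ?_
  · exact zmultiples_le.2 (zsmul_mem (mem_zmultiples x) a)
  · exact zmultiples_le.2 (zsmul_mem (mem_zmultiples x) b)
  · obtain ⟨u, v, huv⟩ := h
    have bezout : u • a • x + v • b • x = x := by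
      rw [← mul_zsmul, ← mul_zsmul, ← add_zsmul, huv, one_zsmul]
    have hmem := add_mem (zsmul_mem (mem_sup_left (mem_zmultiples (a • x))) u)
      (zsmul_mem (mem_sup_right (mem_zmultiples (b • x))) v)
    rwa [bezout, ← zmultiples_le] at hmem

theorem zmultiples_sup_eq_of_sub_mem {x y : G} {H : AddSubgroup G} (h : x - y ∈ H) :
    zmultiples x ⊔ H = zmultiples y ⊔ H := by
  have le_of_sub_mem : ∀ {x y : G}, x - y ∈ H → zmultiples x ⊔ H ≤ zmultiples y ⊔ H :=
    fun {x y} h => sup_le (zmultiples_le.2 (by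
      simpa using add_mem (mem_sup_right h) (mem_sup_left (mem_zmultiples y)))) le_sup_right
  exact le_antisymm (le_of_sub_mem h) (le_of_sub_mem (by simpa using neg_mem h))

end AddSubgroup

theorem jvalue_succ_sub_mem_closure (p q : ℕ → ℕ) (β : ℕ → ℚ)
    (hβ1 : β 1 = (p 1 : ℚ) / (q 1 : ℚ))
    (hβ : ∀ i, 1 ≤ i →
      β (i + 1) = (q i : ℚ) * β i
        + (1 / ∏ j ∈ Finset.Icc 1 i, (q j : ℚ)) * ((p (i + 1) : ℚ) / (q (i + 1) : ℚ)))
    (k : ℕ) :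
    β (k + 1) - (p (k + 1) : ℤ) • (1 / ∏ j ∈ Finset.Icc 1 (k + 1), (q j : ℚ))
      ∈ AddSubgroup.closure (β '' {j | j ≤ k}) := by
  rw [Finset.prod_Icc_succ_top (by omega), zsmul_eq_mul]
  rcases Nat.eq_zero_or_pos k with rfl | hk
  · simp [hβ1, div_eq_mul_inv]
  · have hβk : β k ∈ AddSubgroup.closure (β '' {j | j ≤ k}) :=
      subset_closure (Set.mem_image_of_mem β (le_refl k))
    convert zsmul_mem hβk (q k : ℤ) using 1
    rw [hβ k hk, zsmul_eq_mul]
    push_cast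
    ring

theorem closure_jvalues_eq_zmultiples (p q : ℕ → ℕ) (β : ℕ → ℚ)
    (hq : ∀ i, 1 ≤ i → 0 < q i)
    (hcop : ∀ i, 1 ≤ i → Nat.Coprime (p i) (q i))
    (hβ0 : β 0 = 1) (hβ1 : β 1 = (p 1 : ℚ) / (q 1 : ℚ))
    (hβ : ∀ i, 1 ≤ i →
      β (i + 1) = (q i : ℚ) * β i
        + (1 / ∏ j ∈ Finset.Icc 1 i, (q j : ℚ)) * ((p (i + 1) : ℚ) / (q (i + 1) : ℚ)))
    (k : ℕ) :
    AddSubgroup.closure (β '' {j | j ≤ k})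
      = zmultiples (1 / ∏ j ∈ Finset.Icc 1 k, (q j : ℚ)) := by
  induction k with
  | zero => simp [hβ0, zmultiples_eq_closure]
  | succ k ih =>
    have hset : {j | j ≤ k + 1} = insert (k + 1) {j | j ≤ k} := by
      ext j
      simp only [Set.mem_ofPred_eq, Set.mem_insert_iff]
      omega
    have hqk : (q (k + 1) : ℚ) ≠ 0 := by exact_mod_cast (hq (k + 1) (by omega)).ne'
    have hprev : 1 / ∏ j ∈ Finset.Icc 1 k, (q j : ℚ)
        = (q (k + 1) : ℤ) • (1 / ∏ j ∈ Finset.Icc 1 (k + 1), (q j : ℚ)) := by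
      rw [Finset.prod_Icc_succ_top (by omega), zsmul_eq_mul]
      push_cast
      field_simp
    rw [hset, Set.image_insert_eq, Set.insert_eq, AddSubgroup.closure_union,
      ← zmultiples_eq_closure,
      zmultiples_sup_eq_of_sub_mem (jvalue_succ_sub_mem_closure p q β hβ1 hβ k), ih, hprev,
      zmultiples_zsmul_sup_zmultiples_zsmul
        (Nat.isCoprime_iff_coprime.2 (hcop (k + 1) (by omega)))]

theorem subgroup_jvalues_general (p q : ℕ → ℕ) (β : ℕ → ℚ)
    (hq : ∀ i, 1 ≤ i → 0 < q i)
    (hcop : ∀ i, 1 ≤ i → Nat.Coprime (p i) (q i))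
    (hβ0 : β 0 = 1) (hβ1 : β 1 = (p 1 : ℚ) / (q 1 : ℚ))
    (hβ : ∀ i, 1 ≤ i →
      β (i + 1) = (q i : ℚ) * β i
        + (1 / ∏ j ∈ Finset.Icc 1 i, (q j : ℚ)) * ((p (i + 1) : ℚ) / (q (i + 1) : ℚ)))
    (k : ℕ) :
    (AddSubgroup.closure (β '' {j | j ≤ k}) : Set ℚ)
      = {x : ℚ | ∃ n : ℤ, x = (n : ℚ) * (1 / ∏ j ∈ Finset.Icc 1 k, (q j : ℚ))} := by
  rw [closure_jvalues_eq_zmultiples p q β hq hcop hβ0 hβ1 hβ k, coe_zmultiples]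
  ext x
  simp only [Set.mem_range, zsmul_eq_mul, Set.mem_ofPred_eq, eq_comm]

/-- The subgroup of ℚ generated by the j-values `β_0, …, β_k` equals `(1/Q_k)ℤ`
where `Q_k = q_1 ⋯ q_k`. -/
theorem subgroup_jvalues (p q : ℕ → ℕ) (β : ℕ → ℚ)
    (hp : ∀ i, 1 ≤ i → 0 < p i) (hq : ∀ i, 1 ≤ i → 0 < q i)
    (hcop : ∀ i, 1 ≤ i → Nat.Coprime (p i) (q i))
    (hβ0 : β 0 = 1) (hβ1 : β 1 = (p 1 : ℚ) / (q 1 : ℚ))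
    (hβ : ∀ i, 1 ≤ i →
      β (i + 1) = (q i : ℚ) * β i
        + (1 / ∏ j ∈ Finset.Icc 1 i, (q j : ℚ)) * ((p (i + 1) : ℚ) / (q (i + 1) : ℚ)))
    (k : ℕ) (hk : 1 ≤ k) :
    (AddSubgroup.closure (β '' {j | j ≤ k}) : Set ℚ)
      = {x : ℚ | ∃ n : ℤ, x = (n : ℚ) * (1 / ∏ j ∈ Finset.Icc 1 k, (q j : ℚ))} :=
  subgroup_jvalues_general p q β hq hcop hβ0 hβ1 hβ k
end

section
/- Let (p_i,q_i), i ≥ 1, be coprime positive integers, Q_k = q_1⋯q_k, and define β_0 = 1, β_{i+1} = q_i β_i + (1/Q_i)(p_{i+1}/q_{i+1}). If x ∈ Γ_k = ⟨β_0,…,β_k⟩ and x ≥ q_k β_k, then there exists a unique representation x = Σ_{j=0}^{k} a_j β_j with integer coefficients satisfying 0 ≤ a_j < q_j for 1 ≤ j ≤ k and a_0 ≥ 0 an arbitrary nonnegative integer. -/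
/-!
Writing `β i = n i / Q i` with `n i` coprime to `q i`, one gets `Γ_k = (1 / Q_k) ℤ`, and `β_k`
generates `Γ_k / Γ_{k-1} ≅ ℤ / q_k`. So the top digit `a_k` is determined modulo `q_k`, hence
uniquely by `0 ≤ a_k < q_k`; as `x ≥ q_k β_k`, the remainder `x - a_k β_k` is at least
`β_k > q_{k-1} β_{k-1}`, and one descends to `k - 1`, ending with a nonnegative integer `a_0`.
-/

open Finset AddSubgroup

theorem mem_zmultiples_inv_iff {K : Type*} [DivisionRing K] {c y : K} :
    y ∈ zmultiples c⁻¹ ↔ ∃ m : ℤ, y = m / c := by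
  simp only [mem_zmultiples_iff, zsmul_eq_mul, div_eq_mul_inv, eq_comm]

namespace BetaSequence

def Q (q : ℕ → ℕ) (k : ℕ) : ℚ := ∏ j ∈ Icc 1 k, (q j : ℚ)

structure IsBetaSeq (p q : ℕ → ℕ) (β : ℕ → ℚ) : Prop where
  zero : β 0 = 1
  one : β 1 = p 1 / q 1
  succ : ∀ i, 1 ≤ i → β (i + 1) = q i * β i + (1 / Q q i) * (p (i + 1) / q (i + 1))

variable {p q : ℕ → ℕ} {β : ℕ → ℚ}

theorem Q_zero : Q q 0 = 1 := rfl

theorem Q_succ (k : ℕ) : Q q (k + 1) = Q q k * q (k + 1) :=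
  prod_Icc_succ_top (by omega) _

theorem Q_pos (hq : ∀ i, 1 ≤ i → 0 < q i) (k : ℕ) : 0 < Q q k :=
  prod_pos fun j hj => Nat.cast_pos.mpr (hq j (mem_Icc.mp hj).1)

theorem zmultiples_inv_Q_mono (hq : ∀ i, 1 ≤ i → 0 < q i) {j k : ℕ} (hjk : j ≤ k) :
    zmultiples (Q q j)⁻¹ ≤ zmultiples (Q q k)⁻¹ := by
  induction k, hjk using Nat.le_induction with
  | base => exact le_rfl
  | succ k _ ih =>
    refine ih.trans (zmultiples_le_of_mem (mem_zmultiples_inv_iff.mpr ⟨q (k + 1), ?_⟩))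
    have : (q (k + 1) : ℚ) ≠ 0 := Nat.cast_ne_zero.mpr (hq (k + 1) (by omega)).ne'
    rw [Q_succ]
    field_simp
    push_cast
    ring

theorem IsBetaSeq.exists_coprime_numerator (hB : IsBetaSeq p q β)
    (hq : ∀ i, 1 ≤ i → 0 < q i) (hcop : ∀ i, 1 ≤ i → Nat.Coprime (p i) (q i))
    {i : ℕ} (hi : 1 ≤ i) : ∃ n : ℤ, IsCoprime n (q i) ∧ β i = n / Q q i := by
  induction i, hi using Nat.le_induction with
  | base => exact ⟨p 1, Int.isCoprime_iff_gcd_eq_one.mpr (hcop 1 le_rfl), by simp [hB.one, Q]⟩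
  | succ i hi ih =>
    obtain ⟨n, -, hn⟩ := ih
    have hcop' : IsCoprime (p (i + 1) : ℤ) (q (i + 1)) :=
      Int.isCoprime_iff_gcd_eq_one.mpr (hcop (i + 1) (by omega))
    refine ⟨p (i + 1) + q i * n * q (i + 1), hcop'.add_mul_right_left _, ?_⟩
    have := (Q_pos hq i).ne'
    have : (q (i + 1) : ℚ) ≠ 0 := Nat.cast_ne_zero.mpr (hq (i + 1) (by omega)).ne'
    rw [hB.succ i hi, hn, Q_succ]
    push_cast
    field_simp
    ring

theorem IsBetaSeq.pos (hB : IsBetaSeq p q β) (hp : ∀ i, 1 ≤ i → 0 < p i)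
    (hq : ∀ i, 1 ≤ i → 0 < q i) (i : ℕ) : 0 < β i := by
  rcases Nat.eq_zero_or_pos i with rfl | hi
  · simp [hB.zero]
  induction i, (hi : 1 ≤ i) using Nat.le_induction with
  | base =>
    have := hp 1 le_rfl
    have := hq 1 le_rfl
    rw [hB.one]
    positivity
  | succ i hi ih =>
    have := hp (i + 1) (by omega)
    have := hq (i + 1) (by omega)
    have := hq i hi
    have := Q_pos hq i
    rw [hB.succ i hi]
    positivity

theorem IsBetaSeq.mul_lt_succ (hB : IsBetaSeq p q β) (hp : ∀ i, 1 ≤ i → 0 < p i)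
    (hq : ∀ i, 1 ≤ i → 0 < q i) {k : ℕ} (hk : 1 ≤ k) : q k * β k < β (k + 1) := by
  have := hp (k + 1) (by omega)
  have := hq (k + 1) (by omega)
  have := Q_pos hq k
  rw [hB.succ k hk, lt_add_iff_pos_right]
  positivity

theorem IsBetaSeq.mem_zmultiples (hB : IsBetaSeq p q β) (hq : ∀ i, 1 ≤ i → 0 < q i)
    (hcop : ∀ i, 1 ≤ i → Nat.Coprime (p i) (q i)) {j k : ℕ} (hjk : j ≤ k) :
    β j ∈ zmultiples (Q q k)⁻¹ := by
  refine zmultiples_inv_Q_mono hq hjk (mem_zmultiples_inv_iff.mpr ?_)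
  rcases Nat.eq_zero_or_pos j with rfl | hj
  · exact ⟨1, by simp [hB.zero, Q_zero]⟩
  · obtain ⟨n, -, hn⟩ := hB.exists_coprime_numerator hq hcop hj
    exact ⟨n, hn⟩

theorem IsBetaSeq.sum_mem_zmultiples (hB : IsBetaSeq p q β) (hq : ∀ i, 1 ≤ i → 0 < q i)
    (hcop : ∀ i, 1 ≤ i → Nat.Coprime (p i) (q i)) {k : ℕ} (a : Fin (k + 1) → ℤ) :
    ∑ j, (a j : ℚ) * β j ∈ zmultiples (Q q k)⁻¹ :=
  sum_mem fun j _ => by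
    rw [← zsmul_eq_mul]
    exact zsmul_mem (hB.mem_zmultiples hq hcop (Nat.lt_succ_iff.mp j.isLt)) _

theorem IsBetaSeq.closure_le_zmultiples (hB : IsBetaSeq p q β) (hq : ∀ i, 1 ≤ i → 0 < q i)
    (hcop : ∀ i, 1 ≤ i → Nat.Coprime (p i) (q i)) (k : ℕ) :
    AddSubgroup.closure (β '' {j | j ≤ k}) ≤ zmultiples (Q q k)⁻¹ :=
  (closure_le _).mpr <| by
    rintro _ ⟨j, hj, rfl⟩
    exact hB.mem_zmultiples hq hcop hj

theorem IsBetaSeq.dvd_of_mul_mem_zmultiples (hB : IsBetaSeq p q β)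
    (hq : ∀ i, 1 ≤ i → 0 < q i) (hcop : ∀ i, 1 ≤ i → Nat.Coprime (p i) (q i))
    {k : ℕ} {c : ℤ} (hc : c * β (k + 1) ∈ zmultiples (Q q k)⁻¹) : (q (k + 1) : ℤ) ∣ c := by
  obtain ⟨n, hn_cop, hn⟩ := hB.exists_coprime_numerator hq hcop (Nat.le_add_left 1 k)
  obtain ⟨m, hm⟩ := mem_zmultiples_inv_iff.mp hc
  have := (Q_pos hq k).ne'
  have : (q (k + 1) : ℚ) ≠ 0 := Nat.cast_ne_zero.mpr (hq (k + 1) (by omega)).ne'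
  have hcm : c * n = q (k + 1) * m := by
    rw [hn, Q_succ] at hm
    field_simp at hm
    exact_mod_cast hm
  exact hn_cop.symm.dvd_of_dvd_mul_right ⟨m, hcm⟩

theorem IsBetaSeq.exists_digit (hB : IsBetaSeq p q β)
    (hq : ∀ i, 1 ≤ i → 0 < q i) (hcop : ∀ i, 1 ≤ i → Nat.Coprime (p i) (q i))
    {k : ℕ} {x : ℚ} (hx : x ∈ zmultiples (Q q (k + 1))⁻¹) :
    ∃ c : ℤ, 0 ≤ c ∧ c < q (k + 1) ∧ x - c * β (k + 1) ∈ zmultiples (Q q k)⁻¹ := by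
  obtain ⟨n, ⟨u, v, huv⟩, hn⟩ := hB.exists_coprime_numerator hq hcop (Nat.le_add_left 1 k)
  obtain ⟨m, rfl⟩ := mem_zmultiples_inv_iff.mp hx
  have hqk : (0 : ℤ) < q (k + 1) := Nat.cast_pos.mpr (hq (k + 1) (by omega))
  -- `u` inverts `n` modulo `q (k + 1)`, so `c = m u` kills `m - c n` modulo `q (k + 1)`
  refine ⟨m * u % q (k + 1), Int.emod_nonneg _ hqk.ne', Int.emod_lt_of_pos _ hqk,
    mem_zmultiples_inv_iff.mpr ⟨m * v + m * u / q (k + 1) * n, ?_⟩⟩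
  have := (Q_pos hq k).ne'
  have : (q (k + 1) : ℚ) ≠ 0 := by exact_mod_cast hqk.ne'
  have hdiv : (q (k + 1) * (m * u / q (k + 1)) : ℤ) = m * u - m * u % q (k + 1) := by
    rw [Int.emod_def]
    ring
  have hdivQ : ((q (k + 1) * (m * u / q (k + 1)) : ℤ) : ℚ) = m * u - (m * u % q (k + 1) : ℤ) := by
    exact_mod_cast hdiv
  have huvQ : (u : ℚ) * n + v * q (k + 1) = 1 := by exact_mod_cast huv
  rw [hn, Q_succ]
  field_simp
  push_cast at hdivQ ⊢
  linear_combination (-(m : ℚ)) * huvQ - n * hdivQ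

theorem IsBetaSeq.eq_zero_of_sum_mul_eq_zero (hB : IsBetaSeq p q β)
    (hq : ∀ i, 1 ≤ i → 0 < q i) (hcop : ∀ i, 1 ≤ i → Nat.Coprime (p i) (q i)) :
    ∀ {k : ℕ} (d : Fin (k + 1) → ℤ), (∀ j : Fin (k + 1), 1 ≤ (j : ℕ) → |d j| < q j) →
      ∑ j, (d j : ℚ) * β j = 0 → d = 0
  | 0, d, _, hsum => by
    ext j
    rw [Fin.fin_one_eq_zero j]
    simpa [hB.zero] using hsum
  | k + 1, d, hd, hsum => by
    rw [Fin.sum_univ_castSucc] at hsum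
    simp only [Fin.val_castSucc, Fin.val_last] at hsum
    have hlast_mem : (d (Fin.last (k + 1)) : ℚ) * β (k + 1) ∈ zmultiples (Q q k)⁻¹ := by
      rw [eq_neg_of_add_eq_zero_right hsum]
      exact neg_mem (hB.sum_mem_zmultiples hq hcop _)
    have hlast : d (Fin.last (k + 1)) = 0 :=
      Int.eq_zero_of_abs_lt_dvd (hB.dvd_of_mul_mem_zmultiples hq hcop hlast_mem)
        (hd _ (by simp))
    have hinit : (fun j : Fin (k + 1) => d j.castSucc) = 0 := by
      refine hB.eq_zero_of_sum_mul_eq_zero hq hcop _ (fun j hj => hd j.castSucc hj) ?_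
      simpa [hlast] using hsum
    ext j
    induction j using Fin.lastCases with
    | last => exact hlast
    | cast j => exact congrFun hinit j

theorem IsBetaSeq.exists_digits (hB : IsBetaSeq p q β) (hp : ∀ i, 1 ≤ i → 0 < p i)
    (hq : ∀ i, 1 ≤ i → 0 < q i) (hcop : ∀ i, 1 ≤ i → Nat.Coprime (p i) (q i)) :
    ∀ {k : ℕ} {x : ℚ}, x ∈ zmultiples (Q q k)⁻¹ → 0 ≤ x → (1 ≤ k → q k * β k ≤ x) →
      ∃ a : Fin (k + 1) → ℤ, (∀ j, 0 ≤ a j) ∧ (∀ j : Fin (k + 1), 1 ≤ (j : ℕ) → a j < q j) ∧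
        x = ∑ j, (a j : ℚ) * β j
  | 0, x, hx, hx0, _ => by
    obtain ⟨m, rfl⟩ := mem_zmultiples_inv_iff.mp hx
    refine ⟨fun _ => m, fun _ => ?_, fun j hj => absurd hj (by omega), by simp [hB.zero, Q_zero]⟩
    simpa [Q_zero] using hx0
  | k + 1, x, hx, _, hxge => by
    obtain ⟨c, hc0, hcq, hxc⟩ := hB.exists_digit hq hcop hx
    have hβ := hB.pos hp hq (k + 1)
    -- the remainder is at least `(q (k + 1) - c) * β (k + 1) ≥ β (k + 1)`
    have hrem : β (k + 1) ≤ x - c * β (k + 1) := by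
      have hcq' : (c : ℚ) + 1 ≤ q (k + 1) := by exact_mod_cast hcq
      nlinarith [hxge le_add_self]
    obtain ⟨a, ha0, haq, hxa⟩ := hB.exists_digits hp hq hcop hxc (hβ.le.trans hrem)
      fun hk => (hB.mul_lt_succ hp hq hk).le.trans hrem
    refine ⟨Fin.snoc a c, ?_, ?_, ?_⟩
    · rw [Fin.forall_fin_succ']
      simpa using ⟨ha0, hc0⟩
    · rw [Fin.forall_fin_succ']
      simpa using ⟨haq, hcq⟩
    · simp [Fin.sum_univ_castSucc, ← hxa]

end BetaSequence

theorem unique_representation_general (p q : ℕ → ℕ) (β : ℕ → ℚ)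
    (hp : ∀ i, 1 ≤ i → 0 < p i) (hq : ∀ i, 1 ≤ i → 0 < q i)
    (hcop : ∀ i, 1 ≤ i → Nat.Coprime (p i) (q i))
    (hβ0 : β 0 = 1) (hβ1 : β 1 = (p 1 : ℚ) / (q 1 : ℚ))
    (hβ : ∀ i, 1 ≤ i →
      β (i + 1) = (q i : ℚ) * β i
        + (1 / ∏ j ∈ Finset.Icc 1 i, (q j : ℚ)) * ((p (i + 1) : ℚ) / (q (i + 1) : ℚ)))
    (k : ℕ)
    (x : ℚ) (hx : x ∈ AddSubgroup.closure (β '' {j | j ≤ k}))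
    (hxge : (q k : ℚ) * β k ≤ x) :
    ∃! a : Fin (k + 1) → ℤ,
      (∀ j, 0 ≤ a j) ∧
      (∀ j : Fin (k + 1), 1 ≤ (j : ℕ) → a j < (q (j : ℕ) : ℤ)) ∧
      x = ∑ j : Fin (k + 1), (a j : ℚ) * β (j : ℕ) := by
  have hB : BetaSequence.IsBetaSeq p q β := ⟨hβ0, hβ1, hβ⟩
  have hx0 : 0 ≤ x := (mul_nonneg (Nat.cast_nonneg _) (hB.pos hp hq k).le).trans hxge
  obtain ⟨a, ha0, haq, hxa⟩ :=
    hB.exists_digits hp hq hcop (hB.closure_le_zmultiples hq hcop k hx) hx0 fun _ => hxge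
  refine ⟨a, ⟨ha0, haq, hxa⟩, fun b ⟨hb0, hbq, hxb⟩ => sub_eq_zero.mp ?_⟩
  refine hB.eq_zero_of_sum_mul_eq_zero hq hcop (b - a)
    (fun j hj => abs_sub_lt_of_nonneg_of_lt (hb0 j) (hbq j hj) (ha0 j) (haq j hj)) ?_
  simp [sub_mul, Finset.sum_sub_distrib, ← hxa, ← hxb]

/-- Unique representation: if `x ∈ Γ_k = ⟨β_0, …, β_k⟩` and `x ≥ q_k β_k`, there is a
unique tuple of integers `a_0, …, a_k` with `a_j ≥ 0`, `a_j < q_j` for `1 ≤ j ≤ k`,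
and `x = Σ a_j β_j`. -/
theorem unique_representation (p q : ℕ → ℕ) (β : ℕ → ℚ)
    (hp : ∀ i, 1 ≤ i → 0 < p i) (hq : ∀ i, 1 ≤ i → 0 < q i)
    (hcop : ∀ i, 1 ≤ i → Nat.Coprime (p i) (q i))
    (hβ0 : β 0 = 1) (hβ1 : β 1 = (p 1 : ℚ) / (q 1 : ℚ))
    (hβ : ∀ i, 1 ≤ i →
      β (i + 1) = (q i : ℚ) * β i
        + (1 / ∏ j ∈ Finset.Icc 1 i, (q j : ℚ)) * ((p (i + 1) : ℚ) / (q (i + 1) : ℚ)))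
    (k : ℕ) (hk : 1 ≤ k)
    (x : ℚ) (hx : x ∈ AddSubgroup.closure (β '' {j | j ≤ k}))
    (hxge : (q k : ℚ) * β k ≤ x) :
    ∃! a : Fin (k + 1) → ℤ,
      (∀ j, 0 ≤ a j) ∧
      (∀ j : Fin (k + 1), 1 ≤ (j : ℕ) → a j < (q (j : ℕ) : ℤ)) ∧
      x = ∑ j : Fin (k + 1), (a j : ℚ) * β (j : ℕ) :=
  unique_representation_general p q β hp hq hcop hβ0 hβ1 hβ k x hx hxge
end

section
/- With β_j defined as above (β_0 = 1, β_{i+1} = q_i β_i + (1/Q_i)(p_{i+1}/q_{i+1}), (p_i,q_i) coprime positive), if Σ_{j=0}^{k} c_j β_j = 0 for integers c_j with |c_j| < q_j for 1 ≤ j ≤ k and c_0 ∈ ℤ arbitrary, then c_j = 0 for all j = 0, 1, …, k. -/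
/-!
Clearing denominators, `N i := β i * (q 1 ⋯ q i)` is an integer satisfying
`N (i + 2) = q (i + 2) * q (i + 1) * N (i + 1) + p (i + 2)`, so `N i` is coprime to `q i`.
Multiplying a relation `∑ j ≤ k, c j * β j = 0` by `q 1 ⋯ q (k - 1)` turns every term but the
last into an integer and the last into `c k * N k / q k`; hence `q k ∣ c k`, and `|c k| < q k`
forces `c k = 0`. Induction on `k` does the rest.
-/

open Finset

lemma Int.dvd_of_intCast_add_mul_div_eq_zero {z c n d : ℤ} (hd : d ≠ 0)
    (hnd : IsCoprime n d) (h : (z : ℚ) + c * (n / d) = 0) : d ∣ c := by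
  have hd' : (d : ℚ) ≠ 0 := by exact_mod_cast hd
  have hcn : c * n = d * -z := by
    field_simp at h
    exact_mod_cast (by linear_combination h : (c : ℚ) * n = d * -z)
  exact hnd.symm.dvd_of_dvd_mul_right ⟨-z, hcn⟩

namespace JValues

variable (p q : ℕ → ℕ)

def num : ℕ → ℤ
  | 0 => 1
  | 1 => p 1
  | i + 2 => q (i + 2) * q (i + 1) * num (i + 1) + p (i + 2)

variable {p q}

lemma isCoprime_num (hcop : ∀ i, 1 ≤ i → Nat.Coprime (p i) (q i)) :
    ∀ {i}, 1 ≤ i → IsCoprime (num p q i) (q i)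
  | 1, _ => Nat.isCoprime_iff_coprime.mpr (hcop 1 le_rfl)
  | i + 2, _ => by
    have hcop' : IsCoprime (p (i + 2) : ℤ) (q (i + 2)) :=
      Nat.isCoprime_iff_coprime.mpr (hcop (i + 2) (by omega))
    have hrec : num p q (i + 2) = p (i + 2) + q (i + 2) * (q (i + 1) * num p q (i + 1)) := by
      rw [num]
      ring
    rw [hrec]
    exact hcop'.add_mul_left_left _

lemma mul_prod_eq_num {β : ℕ → ℚ} (hq : ∀ i, 1 ≤ i → 0 < q i)
    (hβ0 : β 0 = 1) (hβ1 : β 1 = (p 1 : ℚ) / (q 1 : ℚ))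
    (hβ : ∀ i, 1 ≤ i →
      β (i + 1) = (q i : ℚ) * β i
        + (1 / ∏ j ∈ Icc 1 i, (q j : ℚ)) * ((p (i + 1) : ℚ) / (q (i + 1) : ℚ))) :
    ∀ i, β i * ∏ j ∈ Icc 1 i, (q j : ℚ) = num p q i
  | 0 => by simp [hβ0, num]
  | 1 => by
    have : (q 1 : ℚ) ≠ 0 := by exact_mod_cast (hq 1 le_rfl).ne'
    simp [hβ1, num, this]
  | i + 2 => by
    have hq' : (q (i + 2) : ℚ) ≠ 0 := by exact_mod_cast (hq (i + 2) (by omega)).ne'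
    have hQ : ∏ j ∈ Icc 1 (i + 1), (q j : ℚ) ≠ 0 :=
      prod_ne_zero_iff.mpr fun j hj => by exact_mod_cast (hq j (mem_Icc.mp hj).1).ne'
    have ih := mul_prod_eq_num hq hβ0 hβ1 hβ (i + 1)
    rw [prod_Icc_succ_top (by omega), hβ (i + 1) (by omega), num]
    push_cast
    rw [← ih]
    field_simp

lemma mul_prod_mem_bot {β : ℕ → ℚ}
    (hnum : ∀ i, β i * ∏ j ∈ Icc 1 i, (q j : ℚ) = num p q i) {j m : ℕ} (hjm : j ≤ m) :
    β j * ∏ i ∈ Icc 1 m, (q i : ℚ) ∈ (⊥ : Subring ℚ) := by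
  obtain ⟨d, hd⟩ := prod_dvd_prod_of_subset (Icc 1 j) (Icc 1 m) q (Icc_subset_Icc_right hjm)
  have hd' : ∏ i ∈ Icc 1 m, (q i : ℚ) = (∏ i ∈ Icc 1 j, (q i : ℚ)) * d := by
    exact_mod_cast hd
  rw [hd', ← mul_assoc, hnum]
  exact mul_mem (intCast_mem _ _) (natCast_mem _ _)

lemma dvd_last_of_sum_eq_zero {β : ℕ → ℚ} (hq : ∀ i, 1 ≤ i → 0 < q i)
    (hcop : ∀ i, 1 ≤ i → Nat.Coprime (p i) (q i))
    (hnum : ∀ i, β i * ∏ j ∈ Icc 1 i, (q j : ℚ) = num p q i)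
    {k : ℕ} (c : Fin (k + 2) → ℤ) (hsum : ∑ j, (c j : ℚ) * β j = 0) :
    (q (k + 1) : ℤ) ∣ c (Fin.last (k + 1)) := by
  set Q := ∏ j ∈ Icc 1 k, (q j : ℚ)
  have hq' : (q (k + 1) : ℚ) ≠ 0 := by exact_mod_cast (hq (k + 1) (by omega)).ne'
  obtain ⟨z, hz⟩ : (∑ j : Fin (k + 1), (c j.castSucc : ℚ) * β j) * Q ∈ (⊥ : Subring ℚ) := by
    rw [sum_mul]
    refine sum_mem fun j _ => ?_
    rw [mul_assoc]
    exact mul_mem (intCast_mem _ _) (mul_prod_mem_bot hnum (by omega))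
  have hlast : β (k + 1) * Q = num p q (k + 1) / q (k + 1) := by
    rw [eq_div_iff hq', ← hnum, prod_Icc_succ_top (by omega)]
    ring
  refine Int.dvd_of_intCast_add_mul_div_eq_zero (z := z) (by exact_mod_cast hq')
    (isCoprime_num hcop (by omega)) ?_
  rw [Fin.sum_univ_castSucc] at hsum
  simp only [Fin.val_castSucc, Fin.val_last] at hsum
  rw [eq_intCast] at hz
  push_cast
  rw [← hlast]
  linear_combination hz + Q * hsum

end JValues

open JValues in
theorem jvalues_linear_independence_general (p q : ℕ → ℕ) (β : ℕ → ℚ)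
    (hq : ∀ i, 1 ≤ i → 0 < q i)
    (hcop : ∀ i, 1 ≤ i → Nat.Coprime (p i) (q i))
    (hβ0 : β 0 = 1) (hβ1 : β 1 = (p 1 : ℚ) / (q 1 : ℚ))
    (hβ : ∀ i, 1 ≤ i →
      β (i + 1) = (q i : ℚ) * β i
        + (1 / ∏ j ∈ Finset.Icc 1 i, (q j : ℚ)) * ((p (i + 1) : ℚ) / (q (i + 1) : ℚ)))
    (k : ℕ) (c : Fin (k + 1) → ℤ)
    (hc : ∀ j : Fin (k + 1), 1 ≤ (j : ℕ) → |c j| < (q (j : ℕ) : ℤ))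
    (hsum : ∑ j : Fin (k + 1), (c j : ℚ) * β (j : ℕ) = 0) :
    ∀ j, c j = 0 := by
  have hnum := mul_prod_eq_num hq hβ0 hβ1 hβ
  induction k with
  | zero =>
    intro j
    rw [Fin.fin_one_eq_zero j]
    simpa [hβ0] using hsum
  | succ k ih =>
    have hlast : c (Fin.last (k + 1)) = 0 :=
      Int.eq_zero_of_abs_lt_dvd (dvd_last_of_sum_eq_zero hq hcop hnum c hsum)
        (hc _ (by simp))
    rw [Fin.sum_univ_castSucc, hlast, Int.cast_zero, zero_mul, add_zero] at hsum
    have hinit := ih (fun j => c j.castSucc) (fun j hj => hc j.castSucc hj) hsum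
    intro j
    rcases Fin.eq_castSucc_or_eq_last j with ⟨i, rfl⟩ | rfl
    · exact hinit i
    · exact hlast

/-- Linear independence: if `Σ_{j=0}^{k} c_j β_j = 0` with integers `c_j` satisfying
`|c_j| < q_j` for `1 ≤ j ≤ k`, then all `c_j = 0`. -/
theorem jvalues_linear_independence (p q : ℕ → ℕ) (β : ℕ → ℚ)
    (hp : ∀ i, 1 ≤ i → 0 < p i) (hq : ∀ i, 1 ≤ i → 0 < q i)
    (hcop : ∀ i, 1 ≤ i → Nat.Coprime (p i) (q i))
    (hβ0 : β 0 = 1) (hβ1 : β 1 = (p 1 : ℚ) / (q 1 : ℚ))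
    (hβ : ∀ i, 1 ≤ i →
      β (i + 1) = (q i : ℚ) * β i
        + (1 / ∏ j ∈ Finset.Icc 1 i, (q j : ℚ)) * ((p (i + 1) : ℚ) / (q (i + 1) : ℚ)))
    (k : ℕ) (c : Fin (k + 1) → ℤ)
    (hc : ∀ j : Fin (k + 1), 1 ≤ (j : ℕ) → |c j| < (q (j : ℕ) : ℤ))
    (hsum : ∑ j : Fin (k + 1), (c j : ℚ) * β (j : ℕ) = 0) :
    ∀ j, c j = 0 :=
  jvalues_linear_independence_general p q β hq hcop hβ0 hβ1 hβ k c hc hsum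
end

section
/- With the j-values β_j as above, for every k > 0 there exists a unique representation q_k β_k = Σ_{j=0}^{k-1} n_{k,j} β_j with integer coefficients n_{k,j} satisfying 0 ≤ n_{k,j} < q_j for 1 ≤ j ≤ k−1 and n_{k,0} ≥ 0. -/
open Finset

def NN (p q : ℕ → ℕ) : ℕ → ℤ
  | 0 => 1
  | 1 => (p 1 : ℤ)
  | (k+2) => (q (k+1) : ℤ) * (q (k+2) : ℤ) * NN p q (k+1) + (p (k+2) : ℤ)

def TT (p q : ℕ → ℕ) : ℕ → ℤ
  | 0 => 0
  | 1 => 0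
  | (k+2) => (q (k+1) : ℤ) * TT p q (k+1) + ((q (k+1) : ℤ) - 1) * NN p q (k+1)

lemma NN_pos (p q : ℕ → ℕ) (hp : ∀ i, 1 ≤ i → 0 < p i) (hq : ∀ i, 1 ≤ i → 0 < q i) :
    ∀ k, 0 < NN p q k := by
  intro k
  induction k with
  | zero => simp [NN]
  | succ k ih =>
    rcases k with _ | j
    · have := hp 1 le_rfl
      simp [NN]; exact_mod_cast this
    · have h1 : (1:ℤ) ≤ (q (j+1) : ℤ) := by exact_mod_cast hq (j+1) (by omega)
      have h2 : (1:ℤ) ≤ (q (j+2) : ℤ) := by exact_mod_cast hq (j+2) (by omega)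
      have h3 : (1:ℤ) ≤ (p (j+2) : ℤ) := by exact_mod_cast hp (j+2) (by omega)
      show 0 < (q (j+1) : ℤ) * (q (j+2) : ℤ) * NN p q (j+1) + (p (j+2) : ℤ)
      nlinarith [mul_le_mul h1 h2 (by norm_num) (by linarith : (0:ℤ) ≤ (q (j+1):ℤ)), mul_pos (mul_pos (by linarith : (0:ℤ) < (q (j+1):ℤ)) (by linarith : (0:ℤ) < (q (j+2):ℤ))) ih]

lemma NN_coprime (p q : ℕ → ℕ) (hcop : ∀ i, 1 ≤ i → Nat.Coprime (p i) (q i)) :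
    ∀ k, 1 ≤ k → IsCoprime (NN p q k) ((q k : ℤ)) := by
  intro k hk
  rcases k with _ | k
  · omega
  rcases k with _ | j
  · show IsCoprime ((p 1 : ℤ)) ((q 1 : ℤ))
    exact Int.isCoprime_iff_gcd_eq_one.mpr (hcop 1 le_rfl)
  · have hbase : IsCoprime ((p (j+2) : ℤ)) ((q (j+2) : ℤ)) :=
      Int.isCoprime_iff_gcd_eq_one.mpr (hcop (j+2) (by omega))
    have hform : NN p q (j+2) = (p (j+2) : ℤ) + (q (j+2) : ℤ) * ((q (j+1) : ℤ) * NN p q (j+1)) := by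
      show (q (j+1) : ℤ) * (q (j+2) : ℤ) * NN p q (j+1) + (p (j+2) : ℤ) = _
      ring
    rw [hform]
    exact hbase.add_mul_left_left _

lemma TT_nonneg (p q : ℕ → ℕ) (hp : ∀ i, 1 ≤ i → 0 < p i) (hq : ∀ i, 1 ≤ i → 0 < q i) :
    ∀ k, 0 ≤ TT p q k := by
  intro k
  induction k with
  | zero => simp [TT]
  | succ k ih =>
    rcases k with _ | j
    · simp [TT]
    · have h1 : (1:ℤ) ≤ (q (j+1) : ℤ) := by exact_mod_cast hq (j+1) (by omega)
      have h2 := NN_pos p q hp hq (j+1)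
      show 0 ≤ (q (j+1) : ℤ) * TT p q (j+1) + ((q (j+1) : ℤ) - 1) * NN p q (j+1)
      nlinarith

lemma TT_lt_NN (p q : ℕ → ℕ) (hp : ∀ i, 1 ≤ i → 0 < p i) (hq : ∀ i, 1 ≤ i → 0 < q i) :
    ∀ k, 1 ≤ k → (q k : ℤ) * TT p q k < NN p q k := by
  intro k hk
  induction k with
  | zero => omega
  | succ k ih =>
    rcases k with _ | j
    · have := hp 1 le_rfl
      simp [TT, NN]
      exact_mod_cast this
    · have ih' := ih (by omega)
      have h1 : (1:ℤ) ≤ (q (j+1) : ℤ) := by exact_mod_cast hq (j+1) (by omega)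
      have h2 : (1:ℤ) ≤ (q (j+2) : ℤ) := by exact_mod_cast hq (j+2) (by omega)
      have h3 : (1:ℤ) ≤ (p (j+2) : ℤ) := by exact_mod_cast hp (j+2) (by omega)
      have h4 := NN_pos p q hp hq (j+1)
      have h5 := TT_nonneg p q hp hq (j+1)
      show (q (j+2) : ℤ) * ((q (j+1) : ℤ) * TT p q (j+1) + ((q (j+1) : ℤ) - 1) * NN p q (j+1))
          < (q (j+1) : ℤ) * (q (j+2) : ℤ) * NN p q (j+1) + (p (j+2) : ℤ)
      nlinarith

lemma TT_le_NN (p q : ℕ → ℕ) (hp : ∀ i, 1 ≤ i → 0 < p i) (hq : ∀ i, 1 ≤ i → 0 < q i)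
    (k : ℕ) (hk : 1 ≤ k) : TT p q k ≤ NN p q k := by
  have h1 : (1:ℤ) ≤ (q k : ℤ) := by exact_mod_cast hq k hk
  have h2 := TT_lt_NN p q hp hq k hk
  have h3 := TT_nonneg p q hp hq k
  nlinarith

lemma Ssum_succ (q : ℕ → ℕ) (N : ℕ → ℤ) (k : ℕ) (f : Fin (k+2) → ℤ) :
    (∑ j : Fin (k+2), f j * N (j : ℕ) * ∏ i ∈ Finset.Icc ((j:ℕ)+1) (k+1), (q i : ℤ))
    = (q (k+1) : ℤ) * (∑ j : Fin (k+1), f j.castSucc * N (j : ℕ) *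
        ∏ i ∈ Finset.Icc ((j:ℕ)+1) k, (q i : ℤ)) + f (Fin.last (k+1)) * N (k+1) := by
  rw [Fin.sum_univ_castSucc, Finset.mul_sum]
  congr 1
  · apply Finset.sum_congr rfl
    intro j _
    rw [Fin.coe_castSucc, Finset.prod_Icc_succ_top (by omega : (j:ℕ)+1 ≤ k+1)]
    ring
  · rw [Fin.val_last, Finset.Icc_eq_empty (by omega), Finset.prod_empty, mul_one]

lemma repr_uniq (p q : ℕ → ℕ) (hq : ∀ i, 1 ≤ i → 0 < q i)
    (hcop : ∀ i, 1 ≤ i → Nat.Coprime (p i) (q i)) :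
    ∀ (k : ℕ) (n m : Fin (k+1) → ℤ),
      (∀ j : Fin (k+1), 1 ≤ (j:ℕ) → 0 ≤ n j ∧ n j < (q (j:ℕ) : ℤ)) →
      (∀ j : Fin (k+1), 1 ≤ (j:ℕ) → 0 ≤ m j ∧ m j < (q (j:ℕ) : ℤ)) →
      (∑ j : Fin (k+1), n j * NN p q (j:ℕ) * ∏ i ∈ Finset.Icc ((j:ℕ)+1) k, (q i : ℤ))
        = (∑ j : Fin (k+1), m j * NN p q (j:ℕ) * ∏ i ∈ Finset.Icc ((j:ℕ)+1) k, (q i : ℤ)) →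
      n = m := by
  intro k
  induction k with
  | zero =>
    intro n m _ _ hsum
    funext j
    have hj : j = 0 := Fin.fin_one_eq_zero j
    subst hj
    simpa [NN, Finset.Icc_eq_empty] using hsum
  | succ k ih =>
    intro n m hn hm hsum
    rw [Ssum_succ, Ssum_succ] at hsum
    -- determine last coefficient
    have hQ : (0:ℤ) < (q (k+1) : ℤ) := by exact_mod_cast hq (k+1) (by omega)
    have hco : IsCoprime ((q (k+1) : ℤ)) (NN p q (k+1)) :=
      (NN_coprime p q hcop (k+1) (by omega)).symm
    have hdvd : (q (k+1) : ℤ) ∣ (m (Fin.last (k+1)) - n (Fin.last (k+1))) * NN p q (k+1) := by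
      refine ⟨(∑ j : Fin (k+1), n j.castSucc * NN p q (j:ℕ) * ∏ i ∈ Finset.Icc ((j:ℕ)+1) k, (q i : ℤ))
        - (∑ j : Fin (k+1), m j.castSucc * NN p q (j:ℕ) * ∏ i ∈ Finset.Icc ((j:ℕ)+1) k, (q i : ℤ)), ?_⟩
      linarith
    have hdvd2 : (q (k+1) : ℤ) ∣ (m (Fin.last (k+1)) - n (Fin.last (k+1))) :=
      hco.dvd_of_dvd_mul_right hdvd
    have hnl := hn (Fin.last (k+1)) (by simp)
    have hml := hm (Fin.last (k+1)) (by simp)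
    rw [Fin.val_last] at hnl hml
    have hlast : m (Fin.last (k+1)) = n (Fin.last (k+1)) := by
      rcases hdvd2 with ⟨c, hc⟩
      have hc1 : c < 1 := by nlinarith
      have hc2 : -1 < c := by nlinarith
      have hc0 : c = 0 := by omega
      rw [hc0, mul_zero] at hc
      omega
    have hrest : (∑ j : Fin (k+1), n j.castSucc * NN p q (j:ℕ) * ∏ i ∈ Finset.Icc ((j:ℕ)+1) k, (q i : ℤ))
        = (∑ j : Fin (k+1), m j.castSucc * NN p q (j:ℕ) * ∏ i ∈ Finset.Icc ((j:ℕ)+1) k, (q i : ℤ)) := by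
      rw [hlast] at hsum
      refine mul_left_cancel₀ (ne_of_gt hQ) ?_
      linarith
    have heq : (fun j : Fin (k+1) => n j.castSucc) = (fun j => m j.castSucc) := by
      apply ih
      · intro j hj
        have := hn j.castSucc (by simpa using hj)
        simpa using this
      · intro j hj
        have := hm j.castSucc (by simpa using hj)
        simpa using this
      · exact hrest
    funext j
    rcases Fin.eq_castSucc_or_eq_last j with ⟨i, rfl⟩ | rfl
    · exact congrFun heq i
    · exact hlast.symm

lemma repr_exists (p q : ℕ → ℕ) (hp : ∀ i, 1 ≤ i → 0 < p i) (hq : ∀ i, 1 ≤ i → 0 < q i)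
    (hcop : ∀ i, 1 ≤ i → Nat.Coprime (p i) (q i)) :
    ∀ (k : ℕ) (M : ℤ), TT p q (k+1) ≤ M →
      ∃ n : Fin (k+1) → ℤ, (∀ j, 0 ≤ n j) ∧
        (∀ j : Fin (k+1), 1 ≤ (j:ℕ) → n j < (q (j:ℕ) : ℤ)) ∧
        M = (∑ j : Fin (k+1), n j * NN p q (j:ℕ) * ∏ i ∈ Finset.Icc ((j:ℕ)+1) k, (q i : ℤ)) := by
  intro k
  induction k with
  | zero =>
    intro M hM
    have hM0 : 0 ≤ M := by simpa [TT] using hM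
    refine ⟨fun _ => M, fun j => hM0, ?_, ?_⟩
    · intro j hj
      have := j.isLt
      omega
    · simp [NN, Finset.Icc_eq_empty]
  | succ k ih =>
    intro M hM
    have hQ : (0:ℤ) < (q (k+1) : ℤ) := by exact_mod_cast hq (k+1) (by omega)
    have hN := NN_pos p q hp hq (k+1)
    obtain ⟨u, v, huv⟩ := NN_coprime p q hcop (k+1) (by omega)
    set r : ℤ := (M * u) % (q (k+1) : ℤ) with hr
    have hr0 : 0 ≤ r := Int.emod_nonneg _ (ne_of_gt hQ)
    have hrlt : r < (q (k+1) : ℤ) := Int.emod_lt_of_pos _ hQ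
    have hmod := Int.mul_ediv_add_emod (M * u) ((q (k+1) : ℤ))
    have hdvd : M - r * NN p q (k+1)
        = (q (k+1) : ℤ) * (M * v + (M * u / (q (k+1) : ℤ)) * NN p q (k+1)) := by
      rw [hr]
      linear_combination (-M) * huv - NN p q (k+1) * hmod
    set M' : ℤ := M * v + (M * u / (q (k+1) : ℤ)) * NN p q (k+1) with hM'
    have hTM' : TT p q (k+1) ≤ M' := by
      have hTT : TT p q (k+2) = (q (k+1) : ℤ) * TT p q (k+1)
          + ((q (k+1) : ℤ) - 1) * NN p q (k+1) := rfl
      have h1 : r * NN p q (k+1) ≤ ((q (k+1) : ℤ) - 1) * NN p q (k+1) :=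
        mul_le_mul_of_nonneg_right (by omega) (le_of_lt hN)
      have h2 : (q (k+1) : ℤ) * TT p q (k+1) ≤ M - r * NN p q (k+1) := by
        rw [hTT] at hM; linarith
      rw [hdvd] at h2
      exact le_of_mul_le_mul_left h2 hQ
    obtain ⟨n', hn'0, hn'lt, hn'sum⟩ := ih M' hTM'
    refine ⟨Fin.snoc n' r, ?_, ?_, ?_⟩
    · intro j
      rcases Fin.eq_castSucc_or_eq_last j with ⟨i, rfl⟩ | rfl
      · simpa using hn'0 i
      · simpa using hr0
    · intro j hj
      rcases Fin.eq_castSucc_or_eq_last j with ⟨i, rfl⟩ | rfl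
      · simp only [Fin.snoc_castSucc, Fin.coe_castSucc]
        exact hn'lt i (by simpa using hj)
      · simpa using hrlt
    · rw [Ssum_succ]
      have h1 : (fun j : Fin (k+1) => (Fin.snoc n' r : Fin (k+2) → ℤ) j.castSucc) = n' := by
        funext i; simp
      simp only [Fin.snoc_castSucc, Fin.snoc_last]
      rw [← hn'sum]
      linarith [hdvd]

lemma beta_eq (p q : ℕ → ℕ) (β : ℕ → ℚ) (hq : ∀ i, 1 ≤ i → 0 < q i)
    (hβ0 : β 0 = 1) (hβ1 : β 1 = (p 1 : ℚ) / (q 1 : ℚ))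
    (hβ : ∀ i, 1 ≤ i →
      β (i + 1) = (q i : ℚ) * β i
        + (1 / ∏ j ∈ Finset.Icc 1 i, (q j : ℚ)) * ((p (i + 1) : ℚ) / (q (i + 1) : ℚ))) :
    ∀ j, (∏ i ∈ Finset.Icc 1 j, (q i : ℚ)) * β j = (NN p q j : ℚ) := by
  have hqne : ∀ i, 1 ≤ i → ((q i : ℚ)) ≠ 0 := by
    intro i hi
    have := hq i hi
    positivity
  intro j
  induction j with
  | zero => simp [NN, hβ0]
  | succ j ih =>
    rcases j with _ | j
    · have h1 : ((q 1 : ℚ)) ≠ 0 := hqne 1 le_rfl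
      simp [NN, hβ1, Finset.Icc_self]
      field_simp
    · have hP : (∏ i ∈ Finset.Icc 1 (j+1), (q i : ℚ)) ≠ 0 := by
        apply Finset.prod_ne_zero_iff.mpr
        intro i hi
        exact hqne i (Finset.mem_Icc.mp hi).1
      have hq2 : ((q (j+2) : ℚ)) ≠ 0 := hqne (j+2) (by omega)
      have hNN : (NN p q (j+2) : ℚ)
          = (q (j+1) : ℚ) * (q (j+2) : ℚ) * (NN p q (j+1) : ℚ) + (p (j+2) : ℚ) := by
        have h : NN p q (j+2) = (q (j+1) : ℤ) * (q (j+2) : ℤ) * NN p q (j+1) + (p (j+2) : ℤ) := rfl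
        rw [h]; push_cast; ring
      rw [Finset.prod_Icc_succ_top (by omega : 1 ≤ j+2), hβ (j+1) (by omega), hNN, ← ih]
      field_simp


/-- For every `k > 0` there is a unique representation
`q_k β_k = Σ_{j=0}^{k-1} n_{k,j} β_j` with integers `n_{k,j} ≥ 0` and
`n_{k,j} < q_j` for `1 ≤ j ≤ k-1`. -/
theorem unique_representation_qk_betak (p q : ℕ → ℕ) (β : ℕ → ℚ)
    (hp : ∀ i, 1 ≤ i → 0 < p i) (hq : ∀ i, 1 ≤ i → 0 < q i)
    (hcop : ∀ i, 1 ≤ i → Nat.Coprime (p i) (q i))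
    (hβ0 : β 0 = 1) (hβ1 : β 1 = (p 1 : ℚ) / (q 1 : ℚ))
    (hβ : ∀ i, 1 ≤ i →
      β (i + 1) = (q i : ℚ) * β i
        + (1 / ∏ j ∈ Finset.Icc 1 i, (q j : ℚ)) * ((p (i + 1) : ℚ) / (q (i + 1) : ℚ)))
    (k : ℕ) (hk : 1 ≤ k) :
    ∃! n : Fin k → ℤ,
      (∀ j, 0 ≤ n j) ∧
      (∀ j : Fin k, 1 ≤ (j : ℕ) → n j < (q (j : ℕ) : ℤ)) ∧
      (q k : ℚ) * β k = ∑ j : Fin k, (n j : ℚ) * β (j : ℕ) := by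
  obtain ⟨m, rfl⟩ : ∃ m, k = m + 1 := ⟨k - 1, by omega⟩
  have hbe := beta_eq p q β hq hβ0 hβ1 hβ
  set P : ℚ := ∏ i ∈ Finset.Icc 1 m, (q i : ℚ) with hPdef
  have hP : P ≠ 0 := by
    apply Finset.prod_ne_zero_iff.mpr
    intro i hi
    have := hq i (Finset.mem_Icc.mp hi).1
    positivity
  have h1 : P * ((q (m+1) : ℚ) * β (m+1)) = (NN p q (m+1) : ℚ) := by
    have := hbe (m+1)
    rw [Finset.prod_Icc_succ_top (by omega : 1 ≤ m+1)] at this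
    rw [← this]; ring
  have hmain : ∀ n : Fin (m+1) → ℤ,
      P * (∑ j : Fin (m+1), (n j : ℚ) * β (j : ℕ))
      = ((∑ j : Fin (m+1), n j * NN p q (j : ℕ) * ∏ i ∈ Finset.Icc ((j:ℕ)+1) m, (q i : ℤ) : ℤ) : ℚ) := by
    intro n
    rw [Finset.mul_sum]
    push_cast
    apply Finset.sum_congr rfl
    intro j _
    have hjm : (j : ℕ) ≤ m := by omega
    have hsplit : (∏ i ∈ Finset.Icc 1 (j:ℕ), (q i : ℚ)) * (∏ i ∈ Finset.Icc ((j:ℕ)+1) m, (q i : ℚ)) = P := by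
      rw [hPdef, show Finset.Icc 1 (j:ℕ) = Finset.Ioc 0 (j:ℕ) from Finset.Icc_add_one_left_eq_Ioc 0 _,
        show Finset.Icc ((j:ℕ)+1) m = Finset.Ioc (j:ℕ) m from Finset.Icc_add_one_left_eq_Ioc _ _,
        show Finset.Icc 1 m = Finset.Ioc 0 m from Finset.Icc_add_one_left_eq_Ioc 0 _]
      exact Finset.prod_Ioc_consecutive _ (Nat.zero_le _) hjm
    calc P * ((n j : ℚ) * β (j:ℕ))
        = (n j : ℚ) * ((∏ i ∈ Finset.Icc 1 (j:ℕ), (q i : ℚ)) * β (j:ℕ)) * (∏ i ∈ Finset.Icc ((j:ℕ)+1) m, (q i : ℚ)) := by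
          rw [← hsplit]; ring
      _ = (n j : ℚ) * (NN p q (j:ℕ) : ℚ) * (∏ i ∈ Finset.Icc ((j:ℕ)+1) m, (q i : ℚ)) := by rw [hbe (j:ℕ)]
  have key : ∀ n : Fin (m+1) → ℤ,
      ((q (m+1) : ℚ) * β (m+1) = ∑ j : Fin (m+1), (n j : ℚ) * β (j : ℕ)) ↔
      (NN p q (m+1) = ∑ j : Fin (m+1), n j * NN p q (j : ℕ) * ∏ i ∈ Finset.Icc ((j:ℕ)+1) m, (q i : ℤ)) := by
    intro n
    constructor
    · intro h
      have : ((NN p q (m+1) : ℤ) : ℚ)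
          = ((∑ j : Fin (m+1), n j * NN p q (j : ℕ) * ∏ i ∈ Finset.Icc ((j:ℕ)+1) m, (q i : ℤ) : ℤ) : ℚ) := by
        rw [← h1, h, hmain n]
      exact_mod_cast this
    · intro h
      apply mul_left_cancel₀ hP
      rw [h1, hmain n]
      exact_mod_cast congrArg (fun z : ℤ => (z : ℚ)) h
  have hTle : TT p q (m+1) ≤ NN p q (m+1) := TT_le_NN p q hp hq (m+1) (by omega)
  obtain ⟨n, h0, hlt, hsum⟩ := repr_exists p q hp hq hcop m (NN p q (m+1)) hTle
  refine ⟨n, ⟨h0, hlt, (key n).mpr hsum⟩, ?_⟩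
  intro y hy
  exact repr_uniq p q hq hcop m y n
    (fun j hj => ⟨hy.1 j, hy.2.1 j hj⟩)
    (fun j hj => ⟨h0 j, hlt j hj⟩)
    (((key y).mp hy.2.2).symm.trans hsum)
end

section
/- Let ν be a valuation with values in ℚ, and let x, y satisfy ν(y)/ν(x) = p/q with p, q coprime positive integers. Let a, b be nonnegative integers with aq − bp = 1, a ≤ p, b < q, and set X = x^a/y^b. Then ν(X) = (1/q)·ν(x), and (1/q)·ν(x) is the greatest rational g such that both ν(x) and ν(y) are integer multiples of g. -/
/-!
With `d = ν(x)/q` the ratio hypothesis says `ν(x) = q·d` and `ν(y) = p·d`, so the Bézout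
relation `a·q − b·p = 1` gives `ν(x^a/y^b) = a·ν(x) − b·ν(y) = d`. The same combination shows
that every common `ℤ`-divisor `g` of `ν(x)` and `ν(y)` divides `d`, which is positive, so `g ≤ d`.
-/

section MapMul

variable {K G : Type*} [GroupWithZero K] [AddGroup G] {ν : K → G}

theorem map_one_of_map_mul (hν : ∀ a b : K, a ≠ 0 → b ≠ 0 → ν (a * b) = ν a + ν b) :
    ν 1 = 0 := by
  have h := hν 1 1 one_ne_zero one_ne_zero
  rw [mul_one] at h
  exact left_eq_add.mp h

theorem map_pow_of_map_mul (hν : ∀ a b : K, a ≠ 0 → b ≠ 0 → ν (a * b) = ν a + ν b)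
    {z : K} (hz : z ≠ 0) (n : ℕ) : ν (z ^ n) = n • ν z := by
  induction n with
  | zero => simpa using map_one_of_map_mul hν
  | succ k ih => rw [pow_succ, hν _ _ (pow_ne_zero _ hz) hz, ih, succ_nsmul]

theorem map_div_of_map_mul (hν : ∀ a b : K, a ≠ 0 → b ≠ 0 → ν (a * b) = ν a + ν b)
    {u v : K} (hu : u ≠ 0) (hv : v ≠ 0) : ν (u / v) = ν u - ν v := by
  have h := hν _ _ (div_ne_zero hu hv) hv
  rw [div_mul_cancel₀ _ hv] at h
  exact eq_sub_of_add_eq h.symm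

end MapMul

theorem isGreatest_commonIntDivisors_of_bezout {R : Type*} [CommRing R] [LinearOrder R]
    [IsStrictOrderedRing R] {d u v : R} {m n s t : ℤ} (hd : 0 < d) (hu : u = m * d)
    (hv : v = n * d) (hbezout : s * m + t * n = 1) :
    IsGreatest {g : R | (∃ k : ℤ, u = k * g) ∧ ∃ k : ℤ, v = k * g} d := by
  refine ⟨⟨⟨m, hu⟩, ⟨n, hv⟩⟩, ?_⟩
  rintro g ⟨⟨k, rfl⟩, ⟨l, rfl⟩⟩
  have hd_eq : d = ((s * k + t * l : ℤ) : R) * g := by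
    have hbezout' : (s : R) * m + t * n = 1 := by exact_mod_cast hbezout
    push_cast
    linear_combination (-d) * hbezout' - s * hu - t * hv
  rcases le_or_gt g 0 with hg | hg
  · exact hg.trans hd.le
  · have hcoeff : 0 < s * k + t * l := by
      rw [hd_eq] at hd
      exact_mod_cast pos_of_mul_pos_left hd hg.le
    calc g = ((1 : ℤ) : R) * g := by simp
      _ ≤ ((s * k + t * l : ℤ) : R) * g := by gcongr; exact_mod_cast hcoeff
      _ = d := hd_eq.symm

theorem value_of_X_is_gcd_general (K : Type*) [Field K] (ν : K → ℚ)
    (hν : ∀ a b : K, a ≠ 0 → b ≠ 0 → ν (a * b) = ν a + ν b)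
    (x y : K) (hx : x ≠ 0) (hy : y ≠ 0) (hνx : 0 < ν x)
    (p q : ℕ) (hq : 0 < q)
    (hratio : ν y / ν x = (p : ℚ) / (q : ℚ))
    (a b : ℕ) (hab : (a : ℤ) * (q : ℤ) - (b : ℤ) * (p : ℤ) = 1) :
    ν (x ^ a / y ^ b) = (1 / (q : ℚ)) * ν x ∧
    IsGreatest {g : ℚ | (∃ n : ℤ, ν x = (n : ℚ) * g) ∧ ∃ m : ℤ, ν y = (m : ℚ) * g}
      ((1 / (q : ℚ)) * ν x) := by
  have hq0 : (q : ℚ) ≠ 0 := by positivity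
  have hνx_eq : ν x = ((q : ℤ) : ℚ) * ((1 / (q : ℚ)) * ν x) := by push_cast; field_simp
  have hνy_eq : ν y = ((p : ℤ) : ℚ) * ((1 / (q : ℚ)) * ν x) := by
    rw [div_eq_div_iff hνx.ne' hq0] at hratio
    field_simp
    push_cast
    linarith
  have hab' : (a : ℚ) * q - b * p = 1 := by exact_mod_cast hab
  constructor
  · rw [map_div_of_map_mul hν (pow_ne_zero _ hx) (pow_ne_zero _ hy), map_pow_of_map_mul hν hx,
      map_pow_of_map_mul hν hy, nsmul_eq_mul, nsmul_eq_mul]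
    push_cast at hνx_eq hνy_eq
    linear_combination (1 / (q : ℚ) * ν x) * hab' + a * hνx_eq - b * hνy_eq
  · exact isGreatest_commonIntDivisors_of_bezout (s := a) (t := -b) (by positivity) hνx_eq hνy_eq
      (by linear_combination hab)

/-- If `ν(y)/ν(x) = p/q` with `p, q` coprime positive and `aq − bp = 1`,
`a ≤ p`, `b < q`, then `ν(x^a/y^b) = (1/q)·ν(x)`, and `(1/q)·ν(x)` is the
greatest rational `g` such that both `ν(x)` and `ν(y)` are integer multiples
of `g`. -/
theorem value_of_X_is_gcd (K : Type*) [Field K] (ν : K → ℚ)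
    (hν : ∀ a b : K, a ≠ 0 → b ≠ 0 → ν (a * b) = ν a + ν b)
    (x y : K) (hx : x ≠ 0) (hy : y ≠ 0) (hνx : 0 < ν x)
    (p q : ℕ) (hp : 0 < p) (hq : 0 < q) (hcop : Nat.Coprime p q)
    (hratio : ν y / ν x = (p : ℚ) / (q : ℚ))
    (a b : ℕ) (hab : (a : ℤ) * (q : ℤ) - (b : ℤ) * (p : ℤ) = 1)
    (hap : a ≤ p) (hbq : b < q) :
    ν (x ^ a / y ^ b) = (1 / (q : ℚ)) * ν x ∧
    IsGreatest {g : ℚ | (∃ n : ℤ, ν x = (n : ℚ) * g) ∧ ∃ m : ℤ, ν y = (m : ℚ) * g}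
      ((1 / (q : ℚ)) * ν x) :=
  value_of_X_is_gcd_general K ν hν x y hx hy hνx p q hq hratio a b hab
end
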